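/- In the ℤ₂ toric code condensation model, the ground space of the effective Hamiltonian H₀ is exactly two-dimensional: the two coherent states ψ₊ := ψ_{g₀=0; h≡0, g≡0} and ψ₋ := ψ_{g₀=1; h≡0, g≡1} satisfy H₀ ψ± = −2N ψ±; moreover ⟪f, H₀ f⟫ ≥ −2N·⟪f,f⟫ for every f ∈ H, and every f with H₀ f = −2N·f lies in the linear span of ψ₊ and ψ₋. -/

import Mathlib

/-!
Each `Q_n` and each `P_n` is an orthogonal projection, so for `Π` any of them
`⟪f, f⟫ - ⟪f, Π f⟫ = ⟪f - Π f, f - Π f⟫ ≥ 0`. Summing over the `2N` projections gives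
`⟪f, H₀ f⟫ + 2N ⟪f, f⟫ ≥ 0`, with equality iff every projection fixes `f`, i.e. iff `f` vanishes
off the flux-free configurations and is invariant under every `W_n(e)`. The `W_n(e)` generate
all shifts of the charges (together with the matching shift of the condensate label), so such
an `f` depends only on the total charge `a + Σ c_n ∈ ℤ₂`. Functions of the total charge form a
two-dimensional space, spanned by `ψ₊` (constant) and `ψ₋` (the sign `(-1)^(a + Σ c_n)`).
-/

open scoped ComplexOrder

/-- The effective Hilbert space of the ℤ₂ toric code condensation model with `N` anyon
sites: functions from (condensate label, per-site (charge, flux)) to `ℂ`. -/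
abbrev Hsp (N : ℕ) : Type := (ZMod 2 × (Fin N → ZMod 2 × ZMod 2)) → ℂ

/-- The diagonal operator of multiplication by `c`. -/
noncomputable def diagOp {X : Type*} (c : X → ℂ) : (X → ℂ) →ₗ[ℂ] (X → ℂ) where
  toFun f := fun x => c x * f x
  map_add' f g := by funext x; simp [mul_add]
  map_smul' r f := by funext x; simp [smul_eq_mul]; ring

/-- The creation operator `W_n(e)`. -/
noncomputable def wOp (N : ℕ) (n : Fin N) : Hsp N →ₗ[ℂ] Hsp N :=
  LinearMap.funLeft ℂ ℂ
    (fun p => (p.1 + 1, Function.update p.2 n ((p.2 n).1 + 1, (p.2 n).2)))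

/-- The projector `Q_n` onto states with trivial flux at site `n`. -/
noncomputable def qOp (N : ℕ) (n : Fin N) : Hsp N →ₗ[ℂ] Hsp N :=
  diagOp (fun p => if (p.2 n).2 = 0 then (1 : ℂ) else 0)

/-- The projector `P_n = (1 + W_n(e))/2`. -/
noncomputable def pOp (N : ℕ) (n : Fin N) : Hsp N →ₗ[ℂ] Hsp N :=
  (1 / 2 : ℂ) • (LinearMap.id + wOp N n)

/-- The effective Hamiltonian `H₀ = −Σ_n (Q_n + P_n)`. -/
noncomputable def ham (N : ℕ) : Hsp N →ₗ[ℂ] Hsp N :=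
  -(∑ n : Fin N, (qOp N n + pOp N n))

/-- The inner product `⟪f,f'⟫ = Σ conj(f)·f'` on the effective Hilbert space. -/
noncomputable def inn (N : ℕ) (f f' : Hsp N) : ℂ :=
  ∑ p, (starRingEnd ℂ) (f p) * f' p

/-- The coherent state `ψ_{g₀;h,g}` of the toric code condensation model. -/
noncomputable def coh (N : ℕ) (g0 : ZMod 2) (h g : Fin N → ZMod 2) : Hsp N :=
  fun p => (((2 : ℝ) ^ (-(((N : ℝ) + 1) / 2)) : ℝ) : ℂ) *
    (-1 : ℂ) ^ (g0.val * p.1.val) *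
    ∏ n : Fin N,
      (if (p.2 n).2 = h n then (-1 : ℂ) ^ ((g n).val * ((p.2 n).1).val) else 0)

lemma zmod_two_eq_zero_or_one (x : ZMod 2) : x = 0 ∨ x = 1 := by
  revert x; decide

lemma neg_one_pow_eq_of_natCast_eq {R : Type*} [Ring R] {m k : ℕ} (h : (m : ZMod 2) = k) :
    (-1 : R) ^ m = (-1) ^ k :=
  neg_one_pow_congr (by simp only [← ZMod.natCast_eq_zero_iff_even, h])

abbrev Cfg (N : ℕ) : Type := ZMod 2 × (Fin N → ZMod 2 × ZMod 2)

section

variable {N : ℕ}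

lemma inn_eq_dotProduct (f g : Hsp N) : inn N f g = star f ⬝ᵥ g := rfl

lemma inn_self_nonneg (f : Hsp N) : 0 ≤ inn N f f := dotProduct_star_self_nonneg f

lemma inn_self_eq_zero {f : Hsp N} : inn N f f = 0 ↔ f = 0 := dotProduct_star_self_eq_zero

lemma inn_add_left (f g h : Hsp N) : inn N (f + g) h = inn N f h + inn N g h := by
  simp only [inn_eq_dotProduct, star_add, add_dotProduct]

lemma inn_add_right (f g h : Hsp N) : inn N f (g + h) = inn N f g + inn N f h :=
  dotProduct_add _ _ _

lemma inn_smul_left (c : ℂ) (f g : Hsp N) : inn N (c • f) g = star c * inn N f g := by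
  simp only [inn_eq_dotProduct, star_smul, smul_dotProduct, smul_eq_mul]

lemma inn_smul_right (c : ℂ) (f g : Hsp N) : inn N f (c • g) = c * inn N f g :=
  dotProduct_smul _ _ _

lemma inn_sub_sub (f g : Hsp N) :
    inn N (f - g) (f - g) = inn N f f - inn N f g - inn N g f + inn N g g := by
  simp only [inn_eq_dotProduct, star_sub, sub_dotProduct, dotProduct_sub]
  ring

lemma inn_self_sub_inn_of_proj (T : Hsp N →ₗ[ℂ] Hsp N)
    (hsymm : ∀ f g, inn N (T f) g = inn N f (T g)) (hidem : ∀ f, T (T f) = T f) (f : Hsp N) :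
    inn N f f - inn N f (T f) = inn N (f - T f) (f - T f) := by
  simp only [inn_sub_sub, hsymm, hidem]
  ring

lemma inn_qOp_left (n : Fin N) (f g : Hsp N) : inn N (qOp N n f) g = inn N f (qOp N n g) := by
  refine Finset.sum_congr rfl fun p _ => ?_
  simp only [qOp, diagOp, LinearMap.coe_mk, AddHom.coe_mk]
  split_ifs <;> simp

lemma qOp_qOp (n : Fin N) (f : Hsp N) : qOp N n (qOp N n f) = qOp N n f := by
  funext p
  simp only [qOp, diagOp, LinearMap.coe_mk, AddHom.coe_mk]
  split_ifs <;> simp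

def eFlip (n : Fin N) (p : Cfg N) : Cfg N :=
  (p.1 + 1, Function.update p.2 n ((p.2 n).1 + 1, (p.2 n).2))

lemma wOp_apply (n : Fin N) (f : Hsp N) (p : Cfg N) : wOp N n f p = f (eFlip n p) := rfl

lemma eFlip_involutive (n : Fin N) : Function.Involutive (eFlip n) := by
  rintro ⟨a, j⟩
  simp [eFlip, add_assoc, CharTwo.add_self_eq_zero]

lemma wOp_wOp (n : Fin N) (f : Hsp N) : wOp N n (wOp N n f) = f :=
  funext fun p => congrArg f (eFlip_involutive n p)

lemma inn_wOp_left (n : Fin N) (f g : Hsp N) : inn N (wOp N n f) g = inn N f (wOp N n g) :=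
  Fintype.sum_equiv (eFlip_involutive n).toPerm _ _ fun p => by
    simp [wOp_apply, eFlip_involutive n p]

lemma pOp_apply (n : Fin N) (f : Hsp N) : pOp N n f = (1 / 2 : ℂ) • (f + wOp N n f) := rfl

lemma inn_pOp_left (n : Fin N) (f g : Hsp N) : inn N (pOp N n f) g = inn N f (pOp N n g) := by
  simp [pOp_apply, inn_add_left, inn_add_right, inn_smul_left, inn_smul_right, inn_wOp_left]

lemma pOp_pOp (n : Fin N) (f : Hsp N) : pOp N n (pOp N n f) = pOp N n f := by
  simp only [pOp_apply, map_smul, map_add, wOp_wOp]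
  module

lemma pOp_eq_self_iff {n : Fin N} {f : Hsp N} : pOp N n f = f ↔ wOp N n f = f := by
  rw [pOp_apply]
  constructor <;> intro h
  · calc wOp N n f = (2 : ℂ) • ((1 / 2 : ℂ) • (f + wOp N n f)) - f := by module
      _ = f := by rw [h]; module
  · rw [h]; module

lemma inn_ham_add_eq_sum (f : Hsp N) :
    inn N f (ham N f) + 2 * N * inn N f f = ∑ n, (inn N (f - qOp N n f) (f - qOp N n f)
      + inn N (f - pOp N n f) (f - pOp N n f)) := by
  simp only [← inn_self_sub_inn_of_proj _ (inn_qOp_left _) (qOp_qOp _),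
    ← inn_self_sub_inn_of_proj _ (inn_pOp_left _) (pOp_pOp _), Finset.sum_add_distrib,
    Finset.sum_sub_distrib, Finset.sum_const, Finset.card_univ, Fintype.card_fin, nsmul_eq_mul]
  simp only [ham, inn_eq_dotProduct, LinearMap.neg_apply, LinearMap.sum_apply,
    LinearMap.add_apply, dotProduct_neg, dotProduct_sum, dotProduct_add, Finset.sum_add_distrib]
  ring

lemma inn_site_nonneg (n : Fin N) (f : Hsp N) :
    0 ≤ inn N (f - qOp N n f) (f - qOp N n f) + inn N (f - pOp N n f) (f - pOp N n f) :=
  add_nonneg (inn_self_nonneg _) (inn_self_nonneg _)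

lemma neg_two_mul_inn_le_inn_ham (f : Hsp N) :
    -(2 * (N : ℂ)) * inn N f f ≤ inn N f (ham N f) := by
  rw [← sub_nonneg, neg_mul, sub_neg_eq_add, inn_ham_add_eq_sum]
  exact Finset.sum_nonneg fun n _ => inn_site_nonneg n f

lemma ham_eq_neg_two_mul_smul_iff {f : Hsp N} :
    ham N f = (-(2 * (N : ℂ))) • f ↔ ∀ n, qOp N n f = f ∧ pOp N n f = f := by
  constructor
  · intro hf n
    have hsum := inn_ham_add_eq_sum f
    rw [hf, inn_smul_right, neg_mul, neg_add_cancel, eq_comm,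
      Finset.sum_eq_zero_iff_of_nonneg fun n _ => inn_site_nonneg n f] at hsum
    obtain ⟨hq, hp⟩ := (add_eq_zero_iff_of_nonneg (inn_self_nonneg _) (inn_self_nonneg _)).1
      (hsum n (Finset.mem_univ n))
    exact ⟨(sub_eq_zero.1 (inn_self_eq_zero.1 hq)).symm,
      (sub_eq_zero.1 (inn_self_eq_zero.1 hp)).symm⟩
  · intro hfix
    simp only [ham, LinearMap.neg_apply, LinearMap.sum_apply, LinearMap.add_apply, hfix,
      Finset.sum_const, Finset.card_univ, Fintype.card_fin, ← Nat.cast_smul_eq_nsmul ℂ]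
    module

def totalCharge (p : Cfg N) : ZMod 2 := p.1 + ∑ n, (p.2 n).1

def eShift (c : Fin N → ZMod 2) (p : Cfg N) : Cfg N :=
  (p.1 + ∑ n, c n, fun n => ((p.2 n).1 + c n, (p.2 n).2))

lemma eShift_zero (p : Cfg N) : eShift 0 p = p := by
  simp [eShift]

lemma eShift_add (c d : Fin N → ZMod 2) (p : Cfg N) :
    eShift (c + d) p = eShift c (eShift d p) := by
  simp only [eShift, Pi.add_apply, Finset.sum_add_distrib]
  ext <;> simp only <;> ring

lemma eShift_single_one (n : Fin N) : eShift (Pi.single n 1) = eFlip n := by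
  funext p
  refine Prod.ext (by simp [eShift, eFlip]) (funext fun m => ?_)
  rcases eq_or_ne m n with rfl | h <;> simp [eShift, eFlip, *]

lemma totalCharge_eShift (c : Fin N → ZMod 2) (p : Cfg N) :
    totalCharge (eShift c p) = totalCharge p := by
  simp only [totalCharge, eShift, Finset.sum_add_distrib]
  linear_combination CharTwo.add_self_eq_zero (∑ n, c n)

lemma apply_eShift_of_apply_eFlip {α : Type*} {f : Cfg N → α}
    (hf : ∀ n p, f (eFlip n p) = f p) (c : Fin N → ZMod 2) (p : Cfg N) :
    f (eShift c p) = f p := by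
  classical
  rw [← Finset.univ_sum_single c]
  refine Finset.sum_induction _ (fun c => ∀ p, f (eShift c p) = f p)
    (fun c d hc hd p => by rw [eShift_add, hc, hd]) (fun p => by rw [eShift_zero])
    (fun n _ p => ?_) p
  rcases zmod_two_eq_zero_or_one (c n) with h | h <;> rw [h]
  · rw [Pi.single_zero, eShift_zero]
  · rw [eShift_single_one, hf]

def chargeState (N : ℕ) : (ZMod 2 → ℂ) →ₗ[ℂ] Hsp N where
  toFun u p := if ∀ n, (p.2 n).2 = 0 then u (totalCharge p) else 0
  map_add' u v := by funext p; by_cases h : ∀ n, (p.2 n).2 = 0 <;> simp [h]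
  map_smul' c u := by funext p; by_cases h : ∀ n, (p.2 n).2 = 0 <;> simp [h]

lemma chargeState_apply (u : ZMod 2 → ℂ) (p : Cfg N) :
    chargeState N u p = if ∀ n, (p.2 n).2 = 0 then u (totalCharge p) else 0 := rfl

lemma qOp_chargeState (n : Fin N) (u : ZMod 2 → ℂ) :
    qOp N n (chargeState N u) = chargeState N u := by
  funext p
  by_cases h : (p.2 n).2 = 0
  · simp [qOp, diagOp, h]
  · have hp : ¬∀ m, (p.2 m).2 = 0 := fun hp => h (hp n)
    simp [qOp, diagOp, chargeState_apply, h, hp]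

lemma wOp_chargeState (n : Fin N) (u : ZMod 2 → ℂ) :
    wOp N n (chargeState N u) = chargeState N u := by
  funext p
  rw [wOp_apply, ← eShift_single_one, chargeState_apply, chargeState_apply, totalCharge_eShift]
  rfl

lemma ham_chargeState (u : ZMod 2 → ℂ) :
    ham N (chargeState N u) = (-(2 * (N : ℂ))) • chargeState N u :=
  ham_eq_neg_two_mul_smul_iff.2 fun n =>
    ⟨qOp_chargeState n u, pOp_eq_self_iff.2 (wOp_chargeState n u)⟩

lemma eq_chargeState_of_qOp_eq_of_wOp_eq {f : Hsp N} (hq : ∀ n, qOp N n f = f) (hw : ∀ n, wOp N n f = f) :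
    f = chargeState N (fun t => f (t, 0)) := by
  funext p
  rw [chargeState_apply]
  split_ifs with hp
  · rw [← apply_eShift_of_apply_eFlip (fun n p => congrFun (hw n) p) (fun n => (p.2 n).1) p]
    congr 1
    ext n
    · rfl
    · exact CharTwo.add_self_eq_zero _
    · exact hp n
  · obtain ⟨n, hn⟩ := not_forall.1 hp
    rw [← hq n]
    simp [qOp, diagOp, hn]

noncomputable def cohNorm (N : ℕ) : ℂ := (((2 : ℝ) ^ (-(((N : ℝ) + 1) / 2)) : ℝ) : ℂ)

lemma cohNorm_ne_zero : cohNorm N ≠ 0 := Complex.ofReal_ne_zero.2 (by positivity)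

lemma coh_const (g0 : ZMod 2) :
    coh N g0 0 (fun _ => g0) = chargeState N (fun t => cohNorm N * (-1) ^ (g0 * t).val) := by
  funext p
  rw [chargeState_apply, coh, cohNorm]
  split_ifs with hp
  · simp only [hp, Pi.zero_apply, if_true, Finset.prod_pow_eq_pow_sum, mul_assoc, ← pow_add]
    congr 1
    apply neg_one_pow_eq_of_natCast_eq
    push_cast [ZMod.natCast_val, ZMod.cast_id, totalCharge]
    rw [mul_add, Finset.mul_sum]
  · obtain ⟨n, hn⟩ := not_forall.1 hp
    rw [Finset.prod_eq_zero (Finset.mem_univ n) (if_neg hn), mul_zero]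

lemma coh_zero_zero_zero : coh N 0 0 0 = chargeState N (fun _ => cohNorm N) := by
  rw [show coh N 0 0 0 = _ from coh_const 0]
  simp

lemma coh_one_zero_one : coh N 1 0 1 = chargeState N (fun t => cohNorm N * (-1) ^ t.val) := by
  rw [show coh N 1 0 1 = _ from coh_const 1]
  simp

lemma chargeState_mem_span (u : ZMod 2 → ℂ) :
    chargeState N u ∈ Submodule.span ℂ ({coh N 0 0 0, coh N 1 0 1} : Set (Hsp N)) := by
  have hC := cohNorm_ne_zero (N := N)
  rw [coh_zero_zero_zero, coh_one_zero_one, ← Set.image_pair]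
  refine Submodule.apply_mem_span_image_of_mem_span _ (Submodule.mem_span_pair.2
    ⟨(u 0 + u 1) / (2 * cohNorm N), (u 0 - u 1) / (2 * cohNorm N), ?_⟩)
  funext t
  simp only [Pi.add_apply, Pi.smul_apply, smul_eq_mul]
  rcases zmod_two_eq_zero_or_one t with rfl | rfl <;> simp [ZMod.val_one] <;> field_simp <;> ring

end

theorem ham_ground_space_general (N : ℕ) :
    ham N (coh N 0 0 0) = (-(2 * (N : ℂ))) • coh N 0 0 0 ∧
    ham N (coh N 1 0 1) = (-(2 * (N : ℂ))) • coh N 1 0 1 ∧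
    (∀ f : Hsp N, (-(2 * (N : ℂ))) * inn N f f ≤ inn N f (ham N f)) ∧
    (∀ f : Hsp N, ham N f = (-(2 * (N : ℂ))) • f →
      f ∈ Submodule.span ℂ ({coh N 0 0 0, coh N 1 0 1} : Set (Hsp N))) := by
  refine ⟨?_, ?_, neg_two_mul_inn_le_inn_ham, fun f hf => ?_⟩
  · rw [coh_zero_zero_zero, ham_chargeState]
  · rw [coh_one_zero_one, ham_chargeState]
  · have hfix := ham_eq_neg_two_mul_smul_iff.1 hf
    rw [eq_chargeState_of_qOp_eq_of_wOp_eq (fun n => (hfix n).1)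
      (fun n => pOp_eq_self_iff.1 (hfix n).2)]
    exact chargeState_mem_span _

/-- the ground space of `H₀` is exactly two-dimensional: the coherent
states `ψ₊ = ψ_{0;0,0}` and `ψ₋ = ψ_{1;0,1}` are eigenvectors with eigenvalue `−2N`,
the Hamiltonian is bounded below by `−2N`, and every eigenvector with eigenvalue `−2N`
lies in the span of `ψ₊` and `ψ₋`. -/
theorem ham_ground_space (N : ℕ) (hN : 1 ≤ N) :
    ham N (coh N 0 0 0) = (-(2 * (N : ℂ))) • coh N 0 0 0 ∧
    ham N (coh N 1 0 1) = (-(2 * (N : ℂ))) • coh N 1 0 1 ∧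
    (∀ f : Hsp N, (-(2 * (N : ℂ))) * inn N f f ≤ inn N f (ham N f)) ∧
    (∀ f : Hsp N, ham N f = (-(2 * (N : ℂ))) • f →
      f ∈ Submodule.span ℂ ({coh N 0 0 0, coh N 1 0 1} : Set (Hsp N))) :=
  ham_ground_space_general N
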